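/- Under the standing assumptions on φ and φ_λ, suppose in addition that h is sequentially weakly continuous on H. Then φ is sequentially weakly upper semicontinuous on H, and for every fixed λ > 0 the function φ_λ is sequentially weakly upper semicontinuous on H; that is, for every sequence x_n converging weakly to x, limsup_{n→∞} φ(x_n) ≤ φ(x) and limsup_{n→∞} φ_λ(x_n) ≤ φ_λ(x). (Theorem 3.1(d).) -/

import Mathlib

open Filter Topology MeasureTheory

/-!
A convex lower semicontinuous function on a locally convex space is the supremum of its continuous
affine minorants, hence sequentially weakly lower semicontinuous. For fixed `z`, both `S(·, z)` (a
supremum of convex continuous functions) and `M_λS(·, z)` have these properties: the envelope is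
convex as a partial minimisation of a jointly convex function, and it is upper semicontinuous as
an infimum of continuous functions, so it is even continuous. An affine minorant of `S` keeps that
infimum bounded below (otherwise `⨅` would return the junk value `0`).

So if `x_n ⇀ x` and `ω` lies in infinitely many of the sets `{f(x_n, ξ) ≤ h(x_n)}`, then
`f(x, ξ ω) ≤ h(x)` since `h(x_n) → h(x)`, and the reverse Fatou inequality
`limsup P(A_n) ≤ P(limsup A_n)` for sets concludes.
-/

/-- The Moreau envelope of a function `S : H × E → ℝ` (in two arguments) with parameter
`lam`, for the Hilbert norm of the product. -/
noncomputable def moreauEnv2 {H E : Type*} [NormedAddCommGroup H] [InnerProductSpace ℝ H]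
    [NormedAddCommGroup E] [InnerProductSpace ℝ E]
    (S : H → E → ℝ) (lam : ℝ) (x : H) (z : E) : ℝ :=
  ⨅ u : H × E, (S u.1 u.2 + (‖x - u.1‖ ^ 2 + ‖z - u.2‖ ^ 2) / (2 * lam))

/-- Weak (sequential) convergence in a Hilbert space: `⟪x_k, y⟫ → ⟪x₀, y⟫` for every `y`. -/
def WeakSeqTendsto {H : Type*} [NormedAddCommGroup H] [InnerProductSpace ℝ H]
    (x : ℕ → H) (x₀ : H) : Prop :=
  ∀ y : H, Tendsto (fun k => (inner ℝ (x k) y : ℝ)) atTop (𝓝 (inner ℝ x₀ y))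

open Set

theorem convexOn_ciSup {ι E : Type*} [AddCommGroup E] [Module ℝ E] {s : Set E} {f : ι → E → ℝ}
    (hf : ∀ i, ConvexOn ℝ s (f i)) (hs : Convex ℝ s) (hbdd : ∀ x, BddAbove (range fun i => f i x)) :
    ConvexOn ℝ s fun x => ⨆ i, f i x := by
  rcases isEmpty_or_nonempty ι with hι | hι
  · simpa only [Real.iSup_of_isEmpty] using convexOn_const (0 : ℝ) hs
  refine ⟨hs, fun x hx y hy a b ha hb hab => ciSup_le fun i => ?_⟩
  calc f i (a • x + b • y) ≤ a * f i x + b * f i y := (hf i).2 hx hy ha hb hab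
    _ ≤ a * (⨆ j, f j x) + b * ⨆ j, f j y :=
      add_le_add (mul_le_mul_of_nonneg_left (le_ciSup (hbdd x) i) ha)
        (mul_le_mul_of_nonneg_left (le_ciSup (hbdd y) i) hb)

theorem ConvexOn.comp_prodMk_left {H E : Type*} [AddCommGroup H] [Module ℝ H] [AddCommGroup E]
    [Module ℝ E] {f : H × E → ℝ} (hf : ConvexOn ℝ univ f) (z : E) :
    ConvexOn ℝ univ fun w => f (w, z) := by
  refine ⟨convex_univ, fun p _ q _ a b ha hb hab => ?_⟩
  simpa [Convex.combo_self hab z] using hf.2 (mem_univ (p, z)) (mem_univ (q, z)) ha hb hab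

theorem convexOn_ciInf_of_convexOn_prod {E U : Type*} [AddCommGroup E] [Module ℝ E]
    [AddCommGroup U] [Module ℝ U] {G : E × U → ℝ} (hG : ConvexOn ℝ univ G)
    (hbdd : ∀ x, BddBelow (range fun u => G (x, u))) :
    ConvexOn ℝ univ fun x => ⨅ u, G (x, u) := by
  refine ⟨convex_univ, fun x₁ _ x₂ _ a b ha hb hab => ?_⟩
  refine le_of_forall_pos_le_add fun ε hε => ?_
  obtain ⟨u₁, hu₁⟩ := exists_lt_of_ciInf_lt (lt_add_of_pos_right (⨅ u, G (x₁, u)) hε)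
  obtain ⟨u₂, hu₂⟩ := exists_lt_of_ciInf_lt (lt_add_of_pos_right (⨅ u, G (x₂, u)) hε)
  calc ⨅ u, G (a • x₁ + b • x₂, u)
      ≤ G (a • (x₁, u₁) + b • (x₂, u₂)) := ciInf_le (hbdd _) (a • u₁ + b • u₂)
    _ ≤ a * G (x₁, u₁) + b * G (x₂, u₂) := hG.2 (mem_univ _) (mem_univ _) ha hb hab
    _ ≤ a * ((⨅ u, G (x₁, u)) + ε) + b * ((⨅ u, G (x₂, u)) + ε) := by gcongr
    _ = a * (⨅ u, G (x₁, u)) + b * (⨅ u, G (x₂, u)) + ε := by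
      linear_combination ε * hab

namespace ConvexOn

variable {E : Type*} [AddCommGroup E] [Module ℝ E] [TopologicalSpace E]
  [IsTopologicalAddGroup E] [ContinuousSMul ℝ E] [LocallyConvexSpace ℝ E] {f : E → ℝ}

theorem exists_affine_le_of_lt_of_lowerSemicontinuous (hf : ConvexOn ℝ univ f)
    (hlsc : LowerSemicontinuous f) {x : E} {a : ℝ} (ha : a < f x) :
    ∃ (l : E →L[ℝ] ℝ) (c : ℝ), (∀ y, l y + c ≤ f y) ∧ l x + c = a := by
  obtain ⟨l, c, hle, hx⟩ := hf.exists_affine_le_of_lt (𝕜 := ℝ) (mem_univ x) ha isClosed_univ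
    (hlsc.lowerSemicontinuousOn _)
  exact ⟨l, c, fun y => by simpa using hle ⟨y, mem_univ y⟩, by simpa using hx⟩

theorem le_of_frequently_le_of_weakly_tendsto {ι : Type*} {L : Filter ι} (hf : ConvexOn ℝ univ f)
    (hlsc : LowerSemicontinuous f) {x : ι → E} {x₀ : E}
    (hx : ∀ l : E →L[ℝ] ℝ, Tendsto (fun n => l (x n)) L (𝓝 (l x₀)))
    {b : ι → ℝ} {B : ℝ} (hb : Tendsto b L (𝓝 B)) (hfreq : ∃ᶠ n in L, f (x n) ≤ b n) :
    f x₀ ≤ B := by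
  refine le_of_forall_lt_imp_le_of_dense fun a ha => ?_
  obtain ⟨l, c, hle, rfl⟩ := hf.exists_affine_le_of_lt_of_lowerSemicontinuous hlsc ha
  have hlim : Tendsto (fun n => b n - (l (x n) + c)) L (𝓝 (B - (l x₀ + c))) :=
    hb.sub ((hx l).add_const c)
  have := ge_of_tendsto_of_frequently hlim (hfreq.mono fun n hn => sub_nonneg.2 ((hle _).trans hn))
  linarith

theorem continuous_of_upperSemicontinuous {E : Type*} [NormedAddCommGroup E] [NormedSpace ℝ E]
    {f : E → ℝ} (hf : ConvexOn ℝ univ f) (husc : UpperSemicontinuous f) : Continuous f := by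
  have hbdd : (𝓝 (0 : E)).IsBoundedUnder (· ≤ ·) f :=
    ⟨f 0 + 1, eventually_map.2 <| (husc 0 _ (lt_add_one _)).mono fun _ h => h.le⟩
  rw [← continuousOn_univ]
  refine ((hf.continuousOn_tfae isOpen_univ univ_nonempty).out 3 1).1 ?_
  exact ⟨0, mem_univ _, hbdd⟩

end ConvexOn

theorem WeakSeqTendsto.tendsto_continuousLinearMap {H : Type*} [NormedAddCommGroup H]
    [InnerProductSpace ℝ H] [CompleteSpace H] {x : ℕ → H} {x₀ : H} (hx : WeakSeqTendsto x x₀)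
    (l : H →L[ℝ] ℝ) : Tendsto (fun n => l (x n)) atTop (𝓝 (l x₀)) := by
  have hl : ∀ u, l u = inner ℝ u ((InnerProductSpace.toDual ℝ H).symm l) := fun u => by
    rw [real_inner_comm, InnerProductSpace.toDual_symm_apply]
  simpa only [hl] using hx _

theorem IsCompact.bddAbove_range_apply_add {Y : Type*} [NormedAddCommGroup Y] [NormedSpace ℝ Y]
    {C : Set (WeakDual ℝ Y)} (hC : IsCompact C) (y : Y) (r : ℝ) :
    BddAbove (range fun v : C => (v : WeakDual ℝ Y) y + r) := by
  rw [← image_eq_range (fun v : WeakDual ℝ Y => v y + r)]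
  exact (hC.image ((WeakDual.eval_continuous y).add continuous_const)).bddAbove

theorem limsup_measure_le_measure_limsup {α : Type*} [MeasurableSpace α] (μ : Measure α)
    [IsFiniteMeasure μ] {s : ℕ → Set α} (hs : ∀ n, MeasurableSet (s n)) :
    limsup (fun n => μ (s n)) atTop ≤ μ (limsup s atTop) := by
  have htail : Tendsto (fun n => μ (⋃ k ≥ n, s k)) atTop (𝓝 (μ (limsup s atTop))) := by
    rw [limsup_eq_iInf_iSup_of_nat]
    simp only [iSup_eq_iUnion, iInf_eq_iInter]
    exact tendsto_measure_iInter_atTop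
      (fun n => (MeasurableSet.biUnion (to_countable _) fun k _ => hs k).nullMeasurableSet)
      (fun i j hij => biUnion_mono (fun k hk => le_trans hij hk) fun _ _ => subset_rfl)
      ⟨0, measure_ne_top μ _⟩
  calc limsup (fun n => μ (s n)) atTop
      ≤ limsup (fun n => μ (⋃ k ≥ n, s k)) atTop :=
        limsup_le_limsup (Eventually.of_forall fun n =>
          measure_mono (subset_biUnion_of_mem (u := s) (le_refl n)))
    _ = μ (limsup s atTop) := htail.limsup_eq

theorem limsup_toReal_measure_le_toReal_measure_limsup {α : Type*} [MeasurableSpace α]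
    (μ : Measure α) [IsFiniteMeasure μ] {s : ℕ → Set α} (hs : ∀ n, MeasurableSet (s n)) :
    limsup (fun n => (μ (s n)).toReal) atTop ≤ (μ (limsup s atTop)).toReal := by
  rw [ENNReal.limsup_toReal_eq (measure_ne_top μ univ)
    (Eventually.of_forall fun n => measure_mono (subset_univ _))]
  exact ENNReal.toReal_mono (measure_ne_top μ _) (limsup_measure_le_measure_limsup μ hs)

section MoreauEnvelope

variable {H E : Type*} [NormedAddCommGroup H] [InnerProductSpace ℝ H]
  [NormedAddCommGroup E] [InnerProductSpace ℝ E] {S : H → E → ℝ} {lam : ℝ}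

theorem bddBelow_moreauEnv2_range (l : H × E →L[ℝ] ℝ) (c : ℝ) (hl : ∀ u, l u + c ≤ S u.1 u.2)
    (hlam : 0 < lam) (x : H) (z : E) :
    BddBelow (range fun u : H × E => S u.1 u.2 + (‖x - u.1‖ ^ 2 + ‖z - u.2‖ ^ 2) / (2 * lam)) := by
  refine ⟨l (x, z) + c - ‖l‖ ^ 2 * lam / 2, ?_⟩
  rintro _ ⟨u, rfl⟩
  set t := ‖(x, z) - u‖
  have hlu : l (x, z) - ‖l‖ * t ≤ l u := by
    have := (le_abs_self _).trans (l.le_opNorm ((x, z) - u))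
    rw [map_sub] at this
    linarith
  have ht : t ^ 2 ≤ ‖x - u.1‖ ^ 2 + ‖z - u.2‖ ^ 2 := by
    rcases max_choice ‖x - u.1‖ ‖z - u.2‖ with hmax | hmax <;>
    · simp only [t, Prod.norm_def, Prod.fst_sub, Prod.snd_sub, hmax]
      nlinarith [sq_nonneg ‖x - u.1‖, sq_nonneg ‖z - u.2‖]
  -- completing the square in `t`
  have hsq : ‖l‖ * t - ‖l‖ ^ 2 * lam / 2 ≤ (‖x - u.1‖ ^ 2 + ‖z - u.2‖ ^ 2) / (2 * lam) := by
    rw [le_div_iff₀ (by positivity)]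
    nlinarith [sq_nonneg (t - ‖l‖ * lam)]
  linarith [hl u]

theorem upperSemicontinuous_moreauEnv2 (l : H × E →L[ℝ] ℝ) (c : ℝ)
    (hl : ∀ u, l u + c ≤ S u.1 u.2) (hlam : 0 < lam) :
    UpperSemicontinuous fun p : H × E => moreauEnv2 S lam p.1 p.2 :=
  upperSemicontinuous_ciInf (fun p => bddBelow_moreauEnv2_range l c hl hlam p.1 p.2)
    fun _ => Continuous.upperSemicontinuous (by fun_prop)

theorem convexOn_moreauEnv2 (l : H × E →L[ℝ] ℝ) (c : ℝ) (hl : ∀ u, l u + c ≤ S u.1 u.2)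
    (hlam : 0 < lam) (hS : ConvexOn ℝ univ fun u : H × E => S u.1 u.2) :
    ConvexOn ℝ univ fun p : H × E => moreauEnv2 S lam p.1 p.2 := by
  have hsqH : ConvexOn ℝ univ fun v : H => ‖v‖ ^ 2 :=
    (convexOn_norm convex_univ).pow (fun _ _ => norm_nonneg _) 2
  have hsqE : ConvexOn ℝ univ fun v : E => ‖v‖ ^ 2 :=
    (convexOn_norm convex_univ).pow (fun _ _ => norm_nonneg _) 2
  let d₁ : (H × E) × (H × E) →ₗ[ℝ] H :=
    LinearMap.fst ℝ H E ∘ₗ LinearMap.fst ℝ _ _ - LinearMap.fst ℝ H E ∘ₗ LinearMap.snd ℝ _ _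
  let d₂ : (H × E) × (H × E) →ₗ[ℝ] E :=
    LinearMap.snd ℝ H E ∘ₗ LinearMap.fst ℝ _ _ - LinearMap.snd ℝ H E ∘ₗ LinearMap.snd ℝ _ _
  have hG : ConvexOn ℝ univ fun q : (H × E) × (H × E) =>
      S q.2.1 q.2.2 + (‖q.1.1 - q.2.1‖ ^ 2 + ‖q.1.2 - q.2.2‖ ^ 2) / (2 * lam) := by
    have hlam' : 0 ≤ (2 * lam)⁻¹ := by positivity
    have := (hS.comp_linearMap (LinearMap.snd ℝ _ _)).add
      (((hsqH.comp_linearMap d₁).add (hsqE.comp_linearMap d₂)).smul hlam')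
    rw [preimage_univ] at this
    refine this.congr fun q _ => ?_
    simp [d₁, d₂, div_eq_inv_mul]
  exact convexOn_ciInf_of_convexOn_prod hG fun p => bddBelow_moreauEnv2_range l c hl hlam p.1 p.2

end MoreauEnvelope

theorem limsup_measure_sublevel_le_of_weakSeqTendsto {H E Ω : Type*} [NormedAddCommGroup H]
    [InnerProductSpace ℝ H] [CompleteSpace H] [MeasurableSpace E] [MeasurableSpace Ω]
    (P : Measure Ω) [IsFiniteMeasure P] {ξ : Ω → E} (hξ : Measurable ξ) {f : H → E → ℝ}
    {g : H → ℝ} (hconv : ∀ z, ConvexOn ℝ univ fun w => f w z)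
    (hlsc : ∀ z, LowerSemicontinuous fun w => f w z) (hmeas : ∀ w, Measurable (f w))
    {x : ℕ → H} {x₀ : H} (hx : WeakSeqTendsto x x₀)
    (hg : Tendsto (fun n => g (x n)) atTop (𝓝 (g x₀))) :
    limsup (fun n => (P {ω | f (x n) (ξ ω) ≤ g (x n)}).toReal) atTop
      ≤ (P {ω | f x₀ (ξ ω) ≤ g x₀}).toReal := by
  refine (limsup_toReal_measure_le_toReal_measure_limsup P fun n =>
    measurableSet_le ((hmeas _).comp hξ) measurable_const).trans
      (ENNReal.toReal_mono (measure_ne_top _ _) (measure_mono fun ω hω => ?_))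
  rw [mem_limsup_iff_frequently_mem] at hω
  exact (hconv (ξ ω)).le_of_frequently_le_of_weakly_tendsto (hlsc (ξ ω))
    hx.tendsto_continuousLinearMap hg hω

theorem stmt8_general
    {H Y : Type*} [NormedAddCommGroup H] [InnerProductSpace ℝ H] [CompleteSpace H]
    [NormedAddCommGroup Y] [NormedSpace ℝ Y] {m : ℕ}
    {Ω : Type*} [MeasurableSpace Ω] (P : Measure Ω) [IsProbabilityMeasure P]
    (ξ : Ω → EuclideanSpace ℝ (Fin m)) (hξ : Measurable ξ)
    (C : Set (WeakDual ℝ Y)) (hCcpt : IsCompact C)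
    (Φ : H → EuclideanSpace ℝ (Fin m) → Y)
    (hΦ : Continuous fun q : H × EuclideanSpace ℝ (Fin m) => Φ q.1 q.2)
    (h : H → ℝ) (hC1 : ContDiff ℝ 1 h)
    (hscal : ∀ v ∈ C, ConvexOn ℝ Set.univ
      (fun q : H × EuclideanSpace ℝ (Fin m) => v (Φ q.1 q.2) + h q.1))
    (S : H → EuclideanSpace ℝ (Fin m) → ℝ)
    (hS : ∀ x z, S x z = ⨆ v : C, ((v : WeakDual ℝ Y) (Φ x z) + h x))
    (φ : H → ℝ)
    (hφ : ∀ x, φ x = (P {ω | S x (ξ ω) ≤ h x}).toReal)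
    (φl : ℝ → H → ℝ)
    (hφl : ∀ lam x, φl lam x = (P {ω | moreauEnv2 S lam x (ξ ω) ≤ h x}).toReal)
    (hwk : ∀ (x : ℕ → H) (x₀ : H), WeakSeqTendsto x x₀ →
      Tendsto (fun k => h (x k)) atTop (𝓝 (h x₀))) :
    ∀ (x : ℕ → H) (x₀ : H), WeakSeqTendsto x x₀ →
      Filter.limsup (fun n => φ (x n)) atTop ≤ φ x₀ ∧
      (∀ lam : ℝ, 0 < lam → Filter.limsup (fun n => φl lam (x n)) atTop ≤ φl lam x₀) := by
  intro x x₀ hx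
  have hSsup : (fun q : H × EuclideanSpace ℝ (Fin m) => S q.1 q.2)
      = fun q => ⨆ v : C, ((v : WeakDual ℝ Y) (Φ q.1 q.2) + h q.1) := funext fun q => hS q.1 q.2
  have hSconv : ConvexOn ℝ univ fun q : H × EuclideanSpace ℝ (Fin m) => S q.1 q.2 := by
    rw [hSsup]
    exact convexOn_ciSup (fun v => hscal v v.2) convex_univ fun _ =>
      hCcpt.bddAbove_range_apply_add _ _
  have hSlsc : LowerSemicontinuous fun q : H × EuclideanSpace ℝ (Fin m) => S q.1 q.2 := by
    rw [hSsup]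
    refine lowerSemicontinuous_ciSup (fun q => hCcpt.bddAbove_range_apply_add _ _) fun v => ?_
    exact (((v : WeakDual ℝ Y) : Y →L[ℝ] ℝ).continuous.comp hΦ |>.add
      (hC1.continuous.comp continuous_fst)).lowerSemicontinuous
  obtain ⟨l, c, hl, -⟩ :=
    hSconv.exists_affine_le_of_lt_of_lowerSemicontinuous hSlsc (x := 0) (sub_one_lt _)
  have hhx := hwk x x₀ hx
  refine ⟨?_, fun lam hlam => ?_⟩
  · simp only [hφ]
    exact limsup_measure_sublevel_le_of_weakSeqTendsto P hξ hSconv.comp_prodMk_left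
      (fun z => hSlsc.comp (Continuous.prodMk_left z))
      (fun w => (hSlsc.comp (Continuous.prodMk_right w)).measurable) hx hhx
  · have hMconv := convexOn_moreauEnv2 l c hl hlam hSconv
    have hMusc := upperSemicontinuous_moreauEnv2 l c hl hlam
    simp only [hφl]
    exact limsup_measure_sublevel_le_of_weakSeqTendsto P hξ hMconv.comp_prodMk_left
      (fun z => ((hMconv.comp_prodMk_left z).continuous_of_upperSemicontinuous
        (hMusc.comp (Continuous.prodMk_left z))).lowerSemicontinuous)
      (fun w => (hMusc.comp (Continuous.prodMk_right w)).measurable) hx hhx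

/-- Theorem 3.1(d): if `h` is sequentially weakly continuous, then `φ` and each `φ_λ`
(`λ > 0`) are sequentially weakly upper semicontinuous on `H`. -/
theorem stmt8
    {H Y : Type*} [NormedAddCommGroup H] [InnerProductSpace ℝ H] [CompleteSpace H]
    [SecondCountableTopology H]
    [NormedAddCommGroup Y] [NormedSpace ℝ Y] [CompleteSpace Y] {m : ℕ}
    {Ω : Type*} [MeasurableSpace Ω] (P : Measure Ω) [IsProbabilityMeasure P]
    (ξ : Ω → EuclideanSpace ℝ (Fin m)) (hξ : Measurable ξ)
    (hlaw : P.map ξ ≪ volume)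
    (K : Set Y) (hKne : K.Nonempty) (hKcl : IsClosed K) (hKconv : Convex ℝ K)
    (hKcone : ∀ c : ℝ, 0 ≤ c → ∀ y ∈ K, c • y ∈ K)
    (C : Set (WeakDual ℝ Y)) (hCne : C.Nonempty) (hCconv : Convex ℝ C) (hCcpt : IsCompact C)
    (hCgen : closure {w : WeakDual ℝ Y | ∃ c : ℝ, 0 ≤ c ∧ ∃ v ∈ C, w = c • v}
      = {w : WeakDual ℝ Y | ∀ y ∈ K, 0 ≤ w y})
    (Φ : H → EuclideanSpace ℝ (Fin m) → Y)
    (hΦ : Continuous fun q : H × EuclideanSpace ℝ (Fin m) => Φ q.1 q.2)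
    (h : H → ℝ) (hconv : ConvexOn ℝ Set.univ h) (hC1 : ContDiff ℝ 1 h)
    (hscal : ∀ v ∈ C, ConvexOn ℝ Set.univ
      (fun q : H × EuclideanSpace ℝ (Fin m) => v (Φ q.1 q.2) + h q.1))
    (S : H → EuclideanSpace ℝ (Fin m) → ℝ)
    (hS : ∀ x z, S x z = ⨆ v : C, ((v : WeakDual ℝ Y) (Φ x z) + h x))
    (φ : H → ℝ)
    (hφ : ∀ x, φ x = (P {ω | S x (ξ ω) ≤ h x}).toReal)
    (φl : ℝ → H → ℝ)
    (hφl : ∀ lam x, φl lam x = (P {ω | moreauEnv2 S lam x (ξ ω) ≤ h x}).toReal)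
    (hwk : ∀ (x : ℕ → H) (x₀ : H), WeakSeqTendsto x x₀ →
      Tendsto (fun k => h (x k)) atTop (𝓝 (h x₀))) :
    ∀ (x : ℕ → H) (x₀ : H), WeakSeqTendsto x x₀ →
      Filter.limsup (fun n => φ (x n)) atTop ≤ φ x₀ ∧
      (∀ lam : ℝ, 0 < lam → Filter.limsup (fun n => φl lam (x n)) atTop ≤ φl lam x₀) :=
  stmt8_general P ξ hξ C hCcpt Φ hΦ h hC1 hscal S hS φ hφ φl hφl hwk
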